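/- Let S be a set with |S| = 3 and let P be an irreducible stochastic matrix on S. Then every probability measure μ consistent with P is a block measure: there exists a partition 𝒮 = {S_1, …, S_l} of S such that for every f ∈ supp(μ) there is a permutation π_f of {1,…,l} with f(S_r) ⊆ S_{π_f(r)} for all r, and k(μ) = l. -/

import Mathlib

open MeasureTheory

namespace CFTP

variable {S : Type*}

/-- Forward composition `f_t ∘ f_{t-1} ∘ ⋯ ∘ f_1` (functions are indexed by 1,2,…). -/
def fwd (f : ℕ → S → S) : ℕ → S → S
  | 0 => id
  | t + 1 => f (t + 1) ∘ fwd f t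

/-- Backward composition `f_1 ∘ f_2 ∘ ⋯ ∘ f_t`. -/
def bwd (f : ℕ → S → S) : ℕ → S → S
  | 0 => id
  | t + 1 => bwd f t ∘ f (t + 1)

/-- `k_t(f⃗)`: the number of equivalence classes of `i ~ j ↔ f⃗_t i = f⃗_t j`,
i.e. the cardinality of the image of the forward composition. -/
noncomputable def ktF (f : ℕ → S → S) (t : ℕ) : ℕ := Set.ncard (Set.range (fwd f t))

/-- `k_t(f⃖)`: the cardinality of the image of the backward composition. -/
noncomputable def ktB (f : ℕ → S → S) (t : ℕ) : ℕ := Set.ncard (Set.range (bwd f t))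

/-- `k(f⃗)`: the eventual (= minimal) value of the non-increasing sequence `k_t(f⃗)`. -/
noncomputable def kF (f : ℕ → S → S) : ℕ := ⨅ t, ktF f t

/-- `k(f⃖)`. -/
noncomputable def kB (f : ℕ → S → S) : ℕ := ⨅ t, ktB f t

/-- `μbar` is the joint law of an i.i.d. sequence with one-step law `ν`,
i.e. the countable product measure `∏_{s ∈ ℕ} ν`, characterised by its
values on cylinder events. -/
def IsIID [MeasurableSpace S] (ν : Measure (S → S)) (μbar : Measure (ℕ → S → S)) : Prop :=
  ∀ (I : Finset ℕ) (g : ℕ → S → S),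
    μbar {F | ∀ s ∈ I, F s = g s} = ∏ s ∈ I, ν {g s}

/-- The support of a probability measure on the finite set `F_S`. -/
def supp [MeasurableSpace S] (ν : Measure (S → S)) : Set (S → S) := {f | 0 < ν {f}}

/-- A stochastic matrix: nonnegative entries, row sums one. -/
def IsStochastic [Fintype S] (P : S → S → ℝ) : Prop :=
  (∀ i j, 0 ≤ P i j) ∧ ∀ i, ∑ j, P i j = 1

/-- `ν ∈ L(P)`: the measure `ν` on `F_S` is consistent with the matrix `P`. -/
def Consistent [Fintype S] [MeasurableSpace S] (P : S → S → ℝ) (ν : Measure (S → S)) : Prop :=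
  ∀ i j, ν {f : S → S | f i = j} = ENNReal.ofReal (P i j)

/-- Irreducibility: for all `i j` some power of `P` has positive `(i,j)` entry. -/
def Irred [Fintype S] [DecidableEq S] (P : S → S → ℝ) : Prop :=
  ∀ i j, ∃ t, 1 ≤ t ∧ 0 < ((Matrix.of P) ^ t) i j

/-- Aperiodicity: for each `i`, the gcd of `{t ≥ 1 : (P^t)_{i,i} > 0}` is `1`,
expressed as: every common divisor of that set equals `1`. -/
def Aperiodic [Fintype S] [DecidableEq S] (P : S → S → ℝ) : Prop :=
  ∀ i, ∀ d : ℕ, (∀ t, 1 ≤ t → 0 < ((Matrix.of P) ^ t) i i → d ∣ t) → d = 1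

/-- A function is constant. -/
def IsConst (g : S → S) : Prop := ∀ i j, g i = g j

/-- The backward coalescence time `C`. -/
noncomputable def Ctime (F : ℕ → S → S) : ℕ∞ :=
  sInf ((fun t : ℕ => (t : ℕ∞)) '' {t : ℕ | 1 ≤ t ∧ IsConst (bwd F t)})

/-- The forward coalescence time `T`. -/
noncomputable def Ttime (F : ℕ → S → S) : ℕ∞ :=
  sInf ((fun t : ℕ => (t : ℕ∞)) '' {t : ℕ | 1 ≤ t ∧ IsConst (fwd F t)})

/-- The 0-1 matrix `M_f`. -/
noncomputable def Mmat [Fintype S] [DecidableEq S] (f : S → S) : Matrix S S ℝ :=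
  Matrix.of fun i j => if f i = j then 1 else 0

/-- The product `M_{f_t} M_{f_{t-1}} ⋯ M_{f_1}`. -/
noncomputable def Mprod [Fintype S] [DecidableEq S] (f : ℕ → S → S) : ℕ → Matrix S S ℝ
  | 0 => 1
  | t + 1 => Mmat (f (t + 1)) * Mprod f t

/-- The event that states `i` and `j` coalesce. -/
def coalEvent (i j : S) : Set (ℕ → S → S) := {F | ∃ t, 1 ≤ t ∧ fwd F t i = fwd F t j}

/-!
Let `W` be the monoid of maps generated by `supp ν`. Every finite word in `supp ν` is an initial
segment of the i.i.d. sequence with positive probability, and almost every sequence consists of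
elements of `supp ν`; since `k(F) = k` almost surely, `k` is the least rank of an element of `W`.
The blocks are the fibres of an element `w` of least rank. For `f ∈ supp ν`, `w ∘ f` has least
rank too, and on a three-element set all elements of least rank of a transitive `W` have the
same kernel: every `u ∈ W` is injective on the image of a minimal `v`, and moving that image
around by irreducibility shows that every point has a partner that no element of `W` merges it
with, so at most one pair of points is merged in `W`. Hence `ker (w ∘ f) = ker w`, i.e. `f`
permutes the fibres of `w`.
-/

def IsMinRank (W : Submonoid (Function.End S)) (w : Function.End S) : Prop :=
  w ∈ W ∧ ∀ u ∈ W, (Set.range w).ncard ≤ (Set.range u).ncard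

section MinRank

variable {W : Submonoid (Function.End S)}

lemma IsMinRank.mul_right [Finite S] {v u : Function.End S} (hv : IsMinRank W v)
    (hu : u ∈ W) : IsMinRank W (v * u) :=
  ⟨W.mul_mem hv.1 hu, fun x hx =>
    (Set.ncard_le_ncard (Set.range_comp_subset_range u v)).trans (hv.2 x hx)⟩

lemma IsMinRank.injOn_range [Finite S] {v u : Function.End S} (hv : IsMinRank W v)
    (hu : u ∈ W) : Set.InjOn u (Set.range v) := by
  refine Set.injOn_of_ncard_image_eq (f := (u : S → S)) ?_
  exact le_antisymm (Set.ncard_image_le) (Set.range_comp u v ▸ hv.2 _ (W.mul_mem hu hv.1))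

lemma IsMinRank.exists_forall_apply_ne [Finite S] (htrans : ∀ i j : S, ∃ w ∈ W, w i = j)
    {v : Function.End S} (hv : IsMinRank W v) {a b : S} (hab : v a ≠ v b) (x : S) :
    ∃ y, ∀ u ∈ W, u x ≠ u y := by
  obtain ⟨σ, hσ, rfl⟩ := htrans (v a) x
  exact ⟨σ (v b), fun u hu =>
    (hv.injOn_range (W.mul_mem hu hσ)).ne ⟨a, rfl⟩ ⟨b, rfl⟩ hab⟩

end MinRank

section CardThree

variable [Fintype S] (h3 : Fintype.card S = 3)
include h3

lemma eq_or_eq_or_eq_of_card_eq_three {x y z : S} (hxy : x ≠ y) (hxz : x ≠ z) (hyz : y ≠ z)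
    (w : S) : w = x ∨ w = y ∨ w = z := by
  classical
  by_contra! h
  have := Finset.card_le_univ (insert w {x, y, z} : Finset S)
  rw [Finset.card_insert_of_notMem (by simp [h.1, h.2.1, h.2.2]),
    Finset.card_insert_of_notMem (by simp [hxy, hxz]), Finset.card_pair hyz, h3] at this
  omega

variable {R : S → S → Prop} (hR : ∀ x, ∃ z, ¬ R x z) (hrefl : ∀ x, R x x)
include hR hrefl

lemma eq_of_rel_of_rel {x y q : S} (hxy : x ≠ y) (hxq : x ≠ q) (hy : R x y) (hq : R x q) :
    y = q := by
  obtain ⟨z, hz⟩ := hR x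
  by_contra hyq
  rcases eq_or_eq_or_eq_of_card_eq_three h3 hxy hxq hyq z with rfl | rfl | rfl
  exacts [hz (hrefl z), hz hy, hz hq]

lemma eq_and_eq_or_eq_and_eq_of_rel_of_rel (hsymm : ∀ x y, R x y → R y x) {x y p q : S}
    (hxy : x ≠ y) (hpq : p ≠ q) (hRxy : R x y) (hRpq : R p q) :
    (p = x ∧ q = y) ∨ (p = y ∧ q = x) := by
  by_cases hpx : p = x
  · subst p
    exact .inl ⟨rfl, (eq_of_rel_of_rel h3 hR hrefl hxy hpq hRxy hRpq).symm⟩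
  by_cases hpy : p = y
  · subst p
    exact .inr ⟨rfl, (eq_of_rel_of_rel h3 hR hrefl hxy.symm hpq (hsymm _ _ hRxy) hRpq).symm⟩
  by_cases hqx : q = x
  · subst q
    exact .inr ⟨(eq_of_rel_of_rel h3 hR hrefl hxy hpq.symm hRxy (hsymm _ _ hRpq)).symm, rfl⟩
  by_cases hqy : q = y
  · subst q
    exact .inl ⟨(eq_of_rel_of_rel h3 hR hrefl hxy.symm hpq.symm (hsymm _ _ hRxy)
      (hsymm _ _ hRpq)).symm, rfl⟩
  rcases eq_or_eq_or_eq_of_card_eq_three h3 hxy (Ne.symm hpx) (Ne.symm hpy) q with h | h | h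
  exacts [absurd h hqx, absurd h hqy, absurd h.symm hpq]

end CardThree

lemma IsMinRank.apply_eq_of_apply_eq [Fintype S] (h3 : Fintype.card S = 3)
    {W : Submonoid (Function.End S)} (htrans : ∀ i j : S, ∃ w ∈ W, w i = j)
    {w w' : Function.End S} (hw : IsMinRank W w) (hw' : IsMinRank W w') {x y : S}
    (h : w x = w y) : w' x = w' y := by
  by_cases hxy : x = y
  · rw [hxy]
  by_cases hconst : ∀ a b, w' a = w' b
  · exact hconst x y
  push Not at hconst
  obtain ⟨a, b, hab⟩ := hconst
  obtain ⟨p, q, hpq, hw'pq⟩ : ∃ p q, p ≠ q ∧ w' p = w' q := by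
    by_contra! hinj
    have hsurj : Function.Surjective w' :=
      Finite.injective_iff_surjective.mp fun p q h => by_contra fun hpq => hinj p q hpq h
    exact hxy (hw'.injOn_range hw.1 (hsurj x) (hsurj y) h)
  let Merged (x y : S) : Prop := ∃ u ∈ W, u x = u y
  have hsep (z : S) : ∃ z', ¬ Merged z z' := by
    simpa [Merged] using hw'.exists_forall_apply_ne htrans hab z
  have hsymm (z z' : S) : Merged z z' → Merged z' z := fun ⟨u, hu, h⟩ => ⟨u, hu, h.symm⟩
  rcases eq_and_eq_or_eq_and_eq_of_rel_of_rel h3 hsep (fun z => ⟨1, W.one_mem, rfl⟩) hsymm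
    hxy hpq ⟨w, hw.1, h⟩ ⟨w', hw'.1, hw'pq⟩ with ⟨rfl, rfl⟩ | ⟨rfl, rfl⟩
  exacts [hw'pq, hw'pq.symm]

lemma exists_blocks_of_apply_eq_iff {α : Type*} [Fintype S] (w : S → α) (T : Set (S → S))
    (hT : ∀ f ∈ T, ∀ x y, w (f x) = w (f y) ↔ w x = w y) :
    ∃ (l : ℕ) (B : Fin l → Finset S),
      (∀ r, (B r).Nonempty) ∧
      (∀ r s, r ≠ s → Disjoint (B r) (B s)) ∧
      (∀ i : S, ∃ r, i ∈ B r) ∧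
      (∀ f ∈ T, ∃ π : Equiv.Perm (Fin l), ∀ r, ∀ i ∈ B r, f i ∈ B (π r)) ∧
      (Set.range w).ncard = l := by
  classical
  let Q := Quotient (Setoid.ker w)
  let e : Fin (Nat.card Q) ≃ Q := (Finite.equivFin Q).symm
  refine ⟨Nat.card Q, fun r => {x | ⟦x⟧ = e r}, ?_, ?_, ?_, ?_, ?_⟩
  · intro r
    obtain ⟨x, hx⟩ := Quotient.exists_rep (e r)
    exact ⟨x, by simpa using hx⟩
  · intro r s hrs
    simp only [Finset.disjoint_left, Finset.mem_filter, Finset.mem_univ, true_and]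
    exact fun x hr hs => hrs (e.injective (hr.symm.trans hs))
  · exact fun i => ⟨e.symm ⟦i⟧, by simp⟩
  · intro f hf
    let φ : Q → Q := Quotient.map' f fun x y h => (hT f hf x y).2 h
    have hφ : φ.Injective := by
      rintro ⟨x⟩ ⟨y⟩ h
      exact Quotient.sound ((hT f hf x y).1 (Quotient.exact h))
    let σ : Q ≃ Q := Equiv.ofBijective φ (Finite.injective_iff_bijective.1 hφ)
    refine ⟨e.trans (σ.trans e.symm), ?_⟩
    intro r i hi
    simp only [Finset.mem_filter, Finset.mem_univ, true_and] at hi ⊢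
    simp [← hi, σ, φ]
  · rw [← Nat.card_coe_set_eq]
    exact Nat.card_congr (Setoid.quotientKerEquivRange w).symm

lemma fwd_congr {F g : ℕ → S → S} {t : ℕ} (h : ∀ s ∈ Finset.Icc 1 t, F s = g s) :
    fwd F t = fwd g t := by
  induction t with
  | zero => rfl
  | succ t ih =>
    simp only [fwd]
    rw [h (t + 1) (by simp), ih fun s hs => h s (by simp at hs ⊢; omega)]

lemma fwd_mem_closure {T : Set (Function.End S)} {g : ℕ → S → S} {t : ℕ}
    (hg : ∀ s ∈ Finset.Icc 1 t, g s ∈ T) :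
    fwd g t ∈ Submonoid.closure T := by
  induction t with
  | zero => exact (Submonoid.closure T).one_mem
  | succ t ih =>
    exact (Submonoid.closure T).mul_mem (Submonoid.subset_closure (hg (t + 1) (by simp)))
      (ih fun s hs => hg s (by simp at hs ⊢; omega))

lemma exists_fwd_eq_of_mem_closure {T : Set (Function.End S)} {w : Function.End S}
    (hw : w ∈ Submonoid.closure T) :
    ∃ (g : ℕ → S → S) (t : ℕ), (∀ s ∈ Finset.Icc 1 t, g s ∈ T) ∧ fwd g t = w := by
  induction hw using Submonoid.closure_induction_left with
  | one => exact ⟨fun _ => id, 0, by simp, rfl⟩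
  | mul_left f hf _ _ ih =>
    obtain ⟨g, t, hg, rfl⟩ := ih
    -- retype `f : Function.End S` as `S → S`, otherwise `Function.update` below is ill-typed
    -- at reducible transparency and `simp` cannot rewrite it
    obtain ⟨f, rfl⟩ : ∃ f' : S → S, f' = f := ⟨f, rfl⟩
    refine ⟨Function.update g (t + 1) f, t + 1, fun s hs => ?_, ?_⟩
    · rcases eq_or_ne s (t + 1) with rfl | hst
      · simp only [Function.update_self]
        exact hf
      · simpa [hst] using hg s (by simp at hs ⊢; omega)
    · simp only [fwd, Function.update_self]
      rw [fwd_congr fun s hs => Function.update_of_ne (by simp at hs; omega) _ _]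
      rfl

section Measure

variable [MeasurableSpace S]

lemma measurableSet_cylinder [Finite S] [DiscreteMeasurableSpace S] (I : Finset ℕ)
    (g : ℕ → S → S) : MeasurableSet {F : ℕ → S → S | ∀ s ∈ I, F s = g s} := by
  simp only [Set.ofPred_forall]
  exact MeasurableSet.iInter fun s => MeasurableSet.iInter fun _ =>
    measurableSet_singleton (g s) |>.preimage (measurable_pi_apply s)

lemma exists_mem_supp_apply_eq [Fintype S] {P : S → S → ℝ} {ν : Measure (S → S)}
    (hcons : Consistent P ν) {i j : S} (h : 0 < P i j) : ∃ f ∈ supp ν, f i = j := by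
  by_contra! hnot
  have hnull : ν {f : S → S | f i = j} = 0 := by
    rw [← Set.biUnion_of_singleton {f : S → S | f i = j},
      measure_biUnion_null_iff (Set.to_countable _)]
    exact fun f hf => nonpos_iff_eq_zero.1 (not_lt.1 fun hpos => hnot f hpos hf)
  rw [hcons i j] at hnull
  exact (ENNReal.ofReal_pos.2 h).ne' hnull

lemma exists_mem_closure_apply_eq_of_pow_ne_zero [Fintype S] [DecidableEq S]
    {P : S → S → ℝ} (hP : ∀ i j, 0 ≤ P i j) {ν : Measure (S → S)} (hcons : Consistent P ν)
    {t : ℕ} {i j : S} (h : (Matrix.of P ^ t) i j ≠ 0) :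
    ∃ w ∈ Submonoid.closure (M := Function.End S) (supp ν), w i = j := by
  induction t generalizing j with
  | zero =>
    obtain rfl : i = j := by simpa [Matrix.one_apply] using h
    exact ⟨1, Submonoid.one_mem _, rfl⟩
  | succ t ih =>
    rw [pow_succ, Matrix.mul_apply] at h
    obtain ⟨m, -, hm⟩ := Finset.exists_ne_zero_of_sum_ne_zero h
    obtain ⟨w, hw, rfl⟩ := ih (left_ne_zero_of_mul hm)
    obtain ⟨f, hf, hfm⟩ :=
      exists_mem_supp_apply_eq hcons ((hP _ j).lt_of_ne' (right_ne_zero_of_mul hm))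
    exact ⟨_, (Submonoid.closure _).mul_mem (Submonoid.subset_closure hf) hw, hfm⟩

variable [Finite S] {ν : Measure (S → S)}
  {μbar : Measure (ℕ → S → S)} (hiid : IsIID ν μbar) {k : ℕ} (hk : μbar {F | kF F = k} = 1)
include hiid hk

lemma le_ncard_range_of_mem_closure [DiscreteMeasurableSpace S] [IsProbabilityMeasure μbar]
    {w : Function.End S} (hw : w ∈ Submonoid.closure (M := Function.End S) (supp ν)) :
    k ≤ (Set.range w).ncard := by
  obtain ⟨g, t, hg, rfl⟩ := exists_fwd_eq_of_mem_closure hw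
  have hcyl : μbar {F | ∀ s ∈ Finset.Icc 1 t, F s = g s} ≠ 0 := by
    rw [hiid]
    exact Finset.prod_ne_zero_iff.2 fun s hs => (hg s hs).ne'
  obtain ⟨F, hFk, hFg⟩ := nonempty_inter_of_measure_lt_add μbar (s := {F | kF F = k})
    (measurableSet_cylinder _ g) (Set.subset_univ _) (Set.subset_univ _)
    (by rw [measure_univ, hk]; exact ENNReal.lt_add_right ENNReal.one_ne_top hcyl)
  calc k = kF F := hFk.symm
    _ ≤ ktF F t := ciInf_le (OrderBot.bddBelow _) t
    _ = (Set.range (fwd g t)).ncard := by rw [ktF, fwd_congr hFg]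

lemma exists_mem_closure_ncard_range_eq :
    ∃ w ∈ Submonoid.closure (M := Function.End S) (supp ν), (Set.range w).ncard = k := by
  have hsupp : ∀ᵐ F ∂μbar, ∀ s, F s ∈ supp ν := by
    refine ae_all_iff.2 fun s => ?_
    have hout : {F : ℕ → S → S | ¬ F s ∈ supp ν} =
        ⋃ f ∈ (supp ν)ᶜ, {F | ∀ s' ∈ ({s} : Finset ℕ), F s' = f} := by
      ext F
      simp
    rw [ae_iff, hout, measure_biUnion_null_iff (Set.to_countable _)]
    intro f hf
    rw [hiid {s} fun _ => f, Finset.prod_singleton]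
    exact nonpos_iff_eq_zero.1 (not_lt.1 hf)
  obtain ⟨F, hFk, hFsupp⟩ := nonempty_of_measure_ne_zero
    (by rw [measure_inter_conull hsupp, hk]; exact one_ne_zero)
  obtain ⟨t, ht⟩ := ciInf_mem (ktF F)
  exact ⟨fwd F t, fwd_mem_closure fun s _ => hFsupp s, ht.trans hFk⟩

lemma exists_isMinRank_ncard_range_eq [DiscreteMeasurableSpace S]
    [IsProbabilityMeasure μbar] :
    ∃ w, IsMinRank (Submonoid.closure (M := Function.End S) (supp ν)) w ∧
      (Set.range w).ncard = k := by
  obtain ⟨w, hw, hwk⟩ := exists_mem_closure_ncard_range_eq hiid hk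
  exact ⟨w, ⟨hw, fun u hu => hwk ▸ le_ncard_range_of_mem_closure hiid hk hu⟩, hwk⟩

end Measure

theorem stmt9_general [Fintype S] [DecidableEq S]
    [MeasurableSpace S] [DiscreteMeasurableSpace S]
    (hcard : Fintype.card S = 3)
    (P : S → S → ℝ) (hP : IsStochastic P) (hirr : Irred P)
    (ν : Measure (S → S)) (hcons : Consistent P ν)
    (μbar : Measure (ℕ → S → S)) [IsProbabilityMeasure μbar] (hiid : IsIID ν μbar)
    (k : ℕ) (hk : μbar {F | kF F = k} = 1) :
    ∃ (l : ℕ) (B : Fin l → Finset S),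
      (∀ r, (B r).Nonempty) ∧
      (∀ r s, r ≠ s → Disjoint (B r) (B s)) ∧
      (∀ i : S, ∃ r, i ∈ B r) ∧
      (∀ f ∈ supp ν, ∃ π : Equiv.Perm (Fin l), ∀ r, ∀ i ∈ B r, f i ∈ B (π r)) ∧
      k = l := by
  have htrans (i j : S) : ∃ w ∈ Submonoid.closure (M := Function.End S) (supp ν), w i = j :=
    have ⟨_, _, hpos⟩ := hirr i j
    exists_mem_closure_apply_eq_of_pow_ne_zero hP.1 hcons hpos.ne'
  obtain ⟨w, hw, rfl⟩ := exists_isMinRank_ncard_range_eq hiid hk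
  refine exists_blocks_of_apply_eq_iff (w : S → S) (supp ν) fun f hf x y => ?_
  have hwf := hw.mul_right (Submonoid.subset_closure hf)
  exact ⟨hwf.apply_eq_of_apply_eq hcard htrans hw, hw.apply_eq_of_apply_eq hcard htrans hwf⟩

theorem stmt9 [Fintype S] [DecidableEq S]
    [MeasurableSpace S] [DiscreteMeasurableSpace S]
    (hcard : Fintype.card S = 3)
    (P : S → S → ℝ) (hP : IsStochastic P) (hirr : Irred P)
    (ν : Measure (S → S)) [IsProbabilityMeasure ν] (hcons : Consistent P ν)
    (μbar : Measure (ℕ → S → S)) [IsProbabilityMeasure μbar] (hiid : IsIID ν μbar)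
    (k : ℕ) (hk : μbar {F | kF F = k} = 1) :
    ∃ (l : ℕ) (B : Fin l → Finset S),
      (∀ r, (B r).Nonempty) ∧
      (∀ r s, r ≠ s → Disjoint (B r) (B s)) ∧
      (∀ i : S, ∃ r, i ∈ B r) ∧
      (∀ f ∈ supp ν, ∃ π : Equiv.Perm (Fin l), ∀ r, ∀ i ∈ B r, f i ∈ B (π r)) ∧
      k = l :=
  stmt9_general hcard P hP hirr ν hcons μbar hiid k hk

end CFTP
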